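/- Let c ∈ (0,1) and a > 2 be real constants, and let (p_n)_{n ∈ ℕ} be a sequence of natural numbers such that p_n / (log n)^c → 0 as n → ∞. Then for all sufficiently large n, n^{−1/(p_n+1)} · log n + ( n^{−1/(2(p_n+1))} · √(p_n) )^{a/(a−1)} ≤ 2 · ( n^{−1/(p_n+1)} · log n )^{a/(2(a−1))}. -/

import Mathlib

/-!
Put `t = n^{-1/(p+1)} log n` and `q = a / (2(a-1)) ∈ (0, 1]`. Since `p = o((log n)^c)` and
`log log n = o((log n)^{1-c})`, eventually `(p+1) log log n ≤ log n`, which is `t ≤ 1`.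
The second summand equals `(n^{-1/(p+1)} p)^q ≤ t^q` because `p ≤ log n`, and `t ≤ t^q`.
-/

open Filter Real Asymptotics

lemma eventually_rpow_add_one_mul_log_le {c : ℝ} (hc : c < 1) :
    ∀ᶠ x : ℝ in atTop, (x ^ c + 1) * log x ≤ x := by
  have hpow : (fun x : ℝ => x ^ c * log x) =o[atTop] id := by
    refine ((isBigO_refl (fun x : ℝ => x ^ c) atTop).mul_isLittleO
      (isLittleO_log_rpow_atTop (sub_pos.2 hc))).congr' EventuallyEq.rfl ?_
    filter_upwards [eventually_gt_atTop 0] with x hx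
    rw [← rpow_add hx, add_sub_cancel, rpow_one, id]
  have hsum : (fun x : ℝ => (x ^ c + 1) * log x) =o[atTop] id := by
    simpa only [add_mul, one_mul] using hpow.add isLittleO_log_id_atTop
  filter_upwards [hsum.bound one_pos, eventually_ge_atTop 0] with x hx hx0
  rw [norm_eq_abs, norm_eq_abs, id, abs_of_nonneg hx0, one_mul] at hx
  exact (le_abs_self _).trans hx

lemma rpow_neg_inv_mul_log_le_one {x P : ℝ} (hx : 0 < x) (hP : 0 < P) (hlog : 0 < log x)
    (h : P * log (log x) ≤ log x) : x ^ (-1 / P) * log x ≤ 1 := by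
  have hexp : log (log x) - log x / P ≤ 0 := by
    rw [sub_nonpos, le_div_iff₀ hP]; linarith
  calc x ^ (-1 / P) * log x = exp (log (log x) - log x / P) := by
        rw [exp_sub, exp_log hlog, rpow_def_of_pos hx,
          show log x * (-1 / P) = -(log x / P) by ring, exp_neg]
        ring
    _ ≤ 1 := exp_le_one_iff.2 hexp

lemma rpow_mul_sqrt_rpow_two_mul {y p : ℝ} (hy : 0 ≤ y) (hp : 0 ≤ p) (r q : ℝ) :
    (y ^ r * √p) ^ (2 * q) = (y ^ (2 * r) * p) ^ q := by
  rw [rpow_mul (by positivity), rpow_two, mul_pow, sq_sqrt hp, mul_comm 2 r, rpow_mul hy,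
    rpow_two]

lemma add_rpow_le_two_mul_rpow {s t q : ℝ} (hs : 0 ≤ s) (hst : s ≤ t) (ht : t ≤ 1)
    (hq0 : 0 ≤ q) (hq1 : q ≤ 1) : t + s ^ q ≤ 2 * t ^ q := by
  have hself : t ≤ t ^ q := self_le_rpow_of_le_one (hs.trans hst) ht hq1
  have hmono : s ^ q ≤ t ^ q := rpow_le_rpow hs hst hq0
  linarith

theorem penalty_term_dominated_general
    (c a : ℝ) (hc1 : c < 1) (ha : 2 < a)
    (p : ℕ → ℕ)
    (hp : Tendsto (fun n : ℕ => (p n : ℝ) / Real.log n ^ c) atTop (nhds 0)) :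
    ∃ N : ℕ, ∀ n : ℕ, N ≤ n →
      (n : ℝ) ^ (-(1 : ℝ) / ((p n : ℝ) + 1)) * Real.log n
          + ((n : ℝ) ^ (-(1 : ℝ) / (2 * ((p n : ℝ) + 1))) * Real.sqrt (p n))
              ^ (a / (a - 1))
        ≤ 2 * ((n : ℝ) ^ (-(1 : ℝ) / ((p n : ℝ) + 1)) * Real.log n)
              ^ (a / (2 * (a - 1))) := by
  set q := a / (2 * (a - 1))
  have hq0 : 0 ≤ q := div_nonneg (by linarith) (by linarith)
  have hq1 : q ≤ 1 := by rw [div_le_one (by linarith)]; linarith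
  have haq : a / (a - 1) = 2 * q := by
    rw [mul_div_assoc', mul_div_mul_left _ _ two_ne_zero]
  have hlog : Tendsto (fun n : ℕ => log n) atTop atTop :=
    tendsto_log_atTop.comp tendsto_natCast_atTop_atTop
  have hp_le : ∀ᶠ n : ℕ in atTop, (p n : ℝ) ≤ log n ^ c := by
    filter_upwards [hp.eventually_lt_const one_pos, hlog.eventually_gt_atTop 0] with n hn hL
    exact ((div_lt_one (rpow_pos_of_pos hL c)).1 hn).le
  rw [← eventually_atTop]
  filter_upwards [eventually_gt_atTop 0, hp_le, hlog.eventually_ge_atTop 1,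
    hlog.eventually (eventually_rpow_add_one_mul_log_le hc1)] with n hn hpn hL hPL
  have hpL : (p n : ℝ) ≤ log n :=
    hpn.trans ((rpow_le_rpow_of_exponent_le hL hc1.le).trans_eq (rpow_one _))
  have ht : (n : ℝ) ^ (-(1 : ℝ) / ((p n : ℝ) + 1)) * log n ≤ 1 :=
    rpow_neg_inv_mul_log_le_one (Nat.cast_pos.2 hn) (by positivity) (by linarith)
      (le_trans (by gcongr; exact log_nonneg hL) hPL)
  rw [haq, rpow_mul_sqrt_rpow_two_mul n.cast_nonneg (p n).cast_nonneg,
    show 2 * (-(1 : ℝ) / (2 * ((p n : ℝ) + 1))) = -1 / ((p n : ℝ) + 1) by field_simp]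
  exact add_rpow_le_two_mul_rpow (by positivity)
    (mul_le_mul_of_nonneg_left hpL (by positivity)) ht hq0 hq1

/-- Let `c ∈ (0,1)`, `a > 2`, and `p_n = o((log n)^c)`. Then for all
sufficiently large `n`,
`n^{-1/(p_n+1)}·log n + (n^{-1/(2(p_n+1))}·√p_n)^{a/(a-1)}
  ≤ 2·(n^{-1/(p_n+1)}·log n)^{a/(2(a-1))}`. -/
theorem penalty_term_dominated
    (c a : ℝ) (hc0 : 0 < c) (hc1 : c < 1) (ha : 2 < a)
    (p : ℕ → ℕ)
    (hp : Tendsto (fun n : ℕ => (p n : ℝ) / Real.log n ^ c) atTop (nhds 0)) :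
    ∃ N : ℕ, ∀ n : ℕ, N ≤ n →
      (n : ℝ) ^ (-(1 : ℝ) / ((p n : ℝ) + 1)) * Real.log n
          + ((n : ℝ) ^ (-(1 : ℝ) / (2 * ((p n : ℝ) + 1))) * Real.sqrt (p n))
              ^ (a / (a - 1))
        ≤ 2 * ((n : ℝ) ^ (-(1 : ℝ) / ((p n : ℝ) + 1)) * Real.log n)
              ^ (a / (2 * (a - 1))) :=
  penalty_term_dominated_general c a hc1 ha p hp
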